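/- In the weakly degenerate case (a continuous on [0,1], a(x₀)=0 with x₀ ∈ (0,1), a > 0 off x₀, a ∈ W^{1,1}, (x-x₀)a' ≤ Ka a.e. with K ∈ (0,1)), the spaces H¹_{1/a}(0,1) := L²_{1/a}(0,1) ∩ H¹₀(0,1) and H¹₀(0,1) coincide as sets, and the norms ‖u‖²_{L²_{1/a}} + ‖u'‖²_{L²} and the standard H¹₀ norm are equivalent. -/

import Mathlib

/-!
The condition `(x - x₀) a' ≤ K a` says exactly that `a x / |x - x₀| ^ K` is nonincreasing to the
right of `x₀` and nondecreasing to its left (integrate `(a φ)'` with `φ = |x - x₀| ^ (-K)`, which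
is legitimate since `a` is absolutely continuous). Hence `a ≥ m |x - x₀| ^ K` with `m > 0`, and
`1 / a` is integrable because `K < 1`. Since `u 0 = 0`, Jensen's inequality gives
`u x ^ 2 ≤ ‖u'‖₂ ^ 2`, so `∫ u² / a ≤ ‖1 / a‖₁ ‖u'‖₂ ^ 2` and `∫ u² ≤ ‖u'‖₂ ^ 2`; both norm
inequalities follow with `C = ‖1 / a‖₁ + 2`.
-/

open MeasureTheory Set

theorem le_of_le_mul_rpow_neg {A b t K : ℝ} (ht : 0 < t) (h : A ≤ b * t ^ (-K)) :
    A * t ^ K ≤ b := by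
  rwa [Real.rpow_neg ht.le, ← div_eq_mul_inv, le_div_iff₀ (Real.rpow_pos_of_pos ht _)] at h

namespace AbsolutelyContinuousOnInterval

theorem congr {f g : ℝ → ℝ} {c d : ℝ} (hf : AbsolutelyContinuousOnInterval f c d)
    (h : EqOn f g (uIcc c d)) : AbsolutelyContinuousOnInterval g c d := by
  rw [absolutelyContinuousOnInterval_iff] at hf ⊢
  intro ε hε
  obtain ⟨δ, hδ, hfδ⟩ := hf ε hε
  refine ⟨δ, hδ, fun E hE hlen => ?_⟩
  convert hfδ E hE hlen using 2 with i hi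
  rw [h (hE.1 i hi).1, h (hE.1 i hi).2]

variable {f : ℝ → ℝ} {c d p K : ℝ}

theorem mul_sub_rpow_neg_le_of_lt (hpc : p < c) (hcd : c ≤ d)
    (hf : AbsolutelyContinuousOnInterval f c d)
    (h : ∀ᵐ s ∂volume.restrict (Icc c d), (s - p) * deriv f s ≤ K * f s) :
    f d * (d - p) ^ (-K) ≤ f c * (c - p) ^ (-K) := by
  have hφ : ContDiffOn ℝ 1 (fun s => (s - p) ^ (-K)) (uIcc c d) :=
    (contDiffOn_id.sub contDiffOn_const).rpow_const_of_ne fun s hs =>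
      (sub_pos.2 (hpc.trans_le (uIcc_of_le hcd ▸ hs).1)).ne'
  have hderiv : ∀ s, p < s →
      deriv (fun s => (s - p) ^ (-K)) s = -K * ((s - p) ^ (-K) / (s - p)) := by
    intro s hs
    rw [((hasDerivAt_id' s).sub_const p).rpow_const (Or.inl (sub_pos.2 hs).ne') |>.deriv,
      Real.rpow_sub_one (sub_pos.2 hs).ne']
    simp
  have key := hf.integral_deriv_mul_eq_sub hφ.absolutelyContinuousOnInterval
  have hint : 0 ≤ ∫ s in c..d, -(deriv f s * (s - p) ^ (-K) +
      f s * deriv (fun s => (s - p) ^ (-K)) s) := by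
    refine intervalIntegral.integral_nonneg_of_ae_restrict hcd ?_
    filter_upwards [h, ae_restrict_mem measurableSet_Icc] with s hs hsI
    have ht : 0 < s - p := sub_pos.2 (hpc.trans_le hsI.1)
    have hw : 0 < (s - p) ^ (-K) := Real.rpow_pos_of_pos ht _
    have : -(deriv f s * (s - p) ^ (-K) + f s * (-K * ((s - p) ^ (-K) / (s - p)))) =
        (s - p) ^ (-K) / (s - p) * (K * f s - (s - p) * deriv f s) := by
      field_simp; ring
    simp only [Pi.zero_apply, hderiv s (hpc.trans_le hsI.1), this]
    exact mul_nonneg (div_pos hw ht).le (sub_nonneg.2 hs)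
  rw [intervalIntegral.integral_neg, key] at hint
  linarith

theorem mul_sub_rpow_neg_le_of_gt (hdp : d < p) (hcd : c ≤ d)
    (hf : AbsolutelyContinuousOnInterval f c d)
    (h : ∀ᵐ s ∂volume.restrict (Icc c d), (s - p) * deriv f s ≤ K * f s) :
    f c * (p - c) ^ (-K) ≤ f d * (p - d) ^ (-K) := by
  have hφ : ContDiffOn ℝ 1 (fun s => (p - s) ^ (-K)) (uIcc c d) :=
    (contDiffOn_const.sub contDiffOn_id).rpow_const_of_ne fun s hs =>
      (sub_pos.2 ((uIcc_of_le hcd ▸ hs).2.trans_lt hdp)).ne'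
  have hderiv : ∀ s, s < p →
      deriv (fun s => (p - s) ^ (-K)) s = K * ((p - s) ^ (-K) / (p - s)) := by
    intro s hs
    rw [((hasDerivAt_id' s).const_sub p).rpow_const (Or.inl (sub_pos.2 hs).ne') |>.deriv,
      Real.rpow_sub_one (sub_pos.2 hs).ne']
    simp
  have key := hf.integral_deriv_mul_eq_sub hφ.absolutelyContinuousOnInterval
  have hint : 0 ≤ ∫ s in c..d, deriv f s * (p - s) ^ (-K) +
      f s * deriv (fun s => (p - s) ^ (-K)) s := by
    refine intervalIntegral.integral_nonneg_of_ae_restrict hcd ?_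
    filter_upwards [h, ae_restrict_mem measurableSet_Icc] with s hs hsI
    have ht : 0 < p - s := sub_pos.2 (hsI.2.trans_lt hdp)
    have hw : 0 < (p - s) ^ (-K) := Real.rpow_pos_of_pos ht _
    have : deriv f s * (p - s) ^ (-K) + f s * (K * ((p - s) ^ (-K) / (p - s))) =
        (p - s) ^ (-K) / (p - s) * (K * f s - (s - p) * deriv f s) := by
      field_simp; ring
    simp only [Pi.zero_apply, hderiv s (hsI.2.trans_lt hdp), this]
    exact mul_nonneg (div_pos hw ht).le (sub_nonneg.2 hs)
  rw [key] at hint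
  linarith

theorem exists_pos_mul_abs_sub_rpow_le (hp : p ∈ Ioo c d)
    (hf : AbsolutelyContinuousOnInterval f c d) (hc : 0 < f c) (hd : 0 < f d)
    (h : ∀ᵐ s ∂volume.restrict (Icc c d), (s - p) * deriv f s ≤ K * f s) :
    ∃ m > 0, ∀ x ∈ Icc c d, x ≠ p → m * |x - p| ^ K ≤ f x := by
  have hsub : ∀ {c' d'}, c' ∈ Icc c d → d' ∈ Icc c d →
      AbsolutelyContinuousOnInterval f c' d' ∧
      ∀ᵐ s ∂volume.restrict (Icc c' d'), (s - p) * deriv f s ≤ K * f s := fun hc' hd' =>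
    ⟨hf.mono (uIcc_subset_uIcc (Icc_subset_uIcc hc') (Icc_subset_uIcc hd')),
      ae_restrict_of_ae_restrict_of_subset (Icc_subset_Icc hc'.1 hd'.2) h⟩
  refine ⟨min (f c * (p - c) ^ (-K)) (f d * (d - p) ^ (-K)),
    lt_min (mul_pos hc (Real.rpow_pos_of_pos (sub_pos.2 hp.1) _))
      (mul_pos hd (Real.rpow_pos_of_pos (sub_pos.2 hp.2) _)), fun x hx hne => ?_⟩
  rcases hne.lt_or_gt with hlt | hgt
  · obtain ⟨hfx, hx'⟩ := hsub (left_mem_Icc.2 (hx.1.trans hx.2)) hx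
    have ht := sub_pos.2 hlt
    rw [abs_sub_comm, abs_of_pos ht]
    exact (mul_le_mul_of_nonneg_right (min_le_left _ _) (Real.rpow_nonneg ht.le _)).trans
      (le_of_le_mul_rpow_neg ht (hfx.mul_sub_rpow_neg_le_of_gt hlt hx.1 hx'))
  · obtain ⟨hfx, hx'⟩ := hsub hx (right_mem_Icc.2 (hx.1.trans hx.2))
    have ht := sub_pos.2 hgt
    rw [abs_of_pos ht]
    exact (mul_le_mul_of_nonneg_right (min_le_right _ _) (Real.rpow_nonneg ht.le _)).trans
      (le_of_le_mul_rpow_neg ht (hfx.mul_sub_rpow_neg_le_of_lt hgt hx.2 hx'))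

end AbsolutelyContinuousOnInterval

theorem absolutelyContinuousOnInterval_of_eq_add_integral {f g : ℝ → ℝ} {c d : ℝ}
    (hg : IntervalIntegrable g volume c d) (hf : ∀ x ∈ uIcc c d, f x = f c + ∫ t in c..x, g t) :
    AbsolutelyContinuousOnInterval f c d :=
  ((contDiffOn_const (c := f c)).absolutelyContinuousOnInterval.add
    (hg.absolutelyContinuousOnInterval_intervalIntegral left_mem_uIcc)).congr
    fun x hx => (hf x hx).symm

theorem intervalIntegrable_abs_sub_rpow {r : ℝ} (hr : -1 < r) (p c d : ℝ) :
    IntervalIntegrable (fun x => |x - p| ^ r) volume c d := by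
  have hpos : ∀ e, 0 ≤ e → IntervalIntegrable (fun x => |x| ^ r) volume 0 e := fun e he =>
    (intervalIntegral.intervalIntegrable_rpow' hr).congr fun x hx => by
      rw [uIoc_of_le he] at hx
      simp only [abs_of_pos hx.1]
  have h : ∀ e, IntervalIntegrable (fun x => |x| ^ r) volume 0 e := by
    intro e
    rcases le_total 0 e with he | he
    · exact hpos e he
    · simpa [abs_neg] using (hpos (-e) (neg_nonneg.2 he)).comp_mul_left (c := -1)
  simpa using ((h (c - p)).symm.trans (h (d - p))).comp_sub_right p

theorem integrableOn_inv_of_mul_abs_sub_rpow_le {f : ℝ → ℝ} {c d p K m : ℝ} (hK : K < 1)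
    (hm : 0 < m) (hf : AEMeasurable f (volume.restrict (Ioo c d)))
    (hle : ∀ x ∈ Ioo c d, x ≠ p → m * |x - p| ^ K ≤ f x) :
    IntegrableOn (fun x => (f x)⁻¹) (Ioo c d) := by
  have hdom : IntegrableOn (fun x => m⁻¹ * |x - p| ^ (-K)) (Ioo c d) :=
    ((intervalIntegrable_abs_sub_rpow (by linarith) p c d).1.mono_set
      Ioo_subset_Ioc_self).const_mul _
  refine hdom.mono' hf.inv.aestronglyMeasurable ?_
  filter_upwards [ae_restrict_mem measurableSet_Ioo, Measure.ae_ne _ p] with x hx hxp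
  have hlow : 0 < m * |x - p| ^ K :=
    mul_pos hm (Real.rpow_pos_of_pos (abs_pos.2 (sub_ne_zero.2 hxp)) _)
  rw [Real.norm_eq_abs, abs_of_pos (inv_pos.2 (hlow.trans_le (hle x hx hxp))),
    Real.rpow_neg (abs_nonneg _), ← mul_inv]
  exact inv_anti₀ hlow (hle x hx hxp)

theorem sq_integral_le_integral_sq {α : Type*} [MeasurableSpace α] {μ : Measure α}
    [IsProbabilityMeasure μ] {f : α → ℝ} (hf : MemLp f 2 μ) :
    (∫ x, f x ∂μ) ^ 2 ≤ ∫ x, f x ^ 2 ∂μ := by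
  have := ProbabilityTheory.variance_nonneg f μ
  rw [ProbabilityTheory.variance_eq_sub hf] at this
  simpa using this

theorem sq_le_integral_sq_of_hasDerivAt {u u' : ℝ → ℝ}
    (hu : ∀ x ∈ Icc (0 : ℝ) 1, HasDerivAt u (u' x) x) (hu0 : u 0 = 0)
    (hu' : IntegrableOn (fun x => u' x ^ 2) (Ioo 0 1)) {x : ℝ} (hx : x ∈ Icc (0 : ℝ) 1) :
    u x ^ 2 ≤ ∫ t in Ioo 0 1, u' t ^ 2 := by
  have : IsProbabilityMeasure (volume.restrict (Ioo (0 : ℝ) 1)) := ⟨by simp [Real.volume_Ioo]⟩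
  have hL2 : MemLp u' 2 (volume.restrict (Ioo (0 : ℝ) 1)) := by
    refine (memLp_two_iff_integrable_sq ?_).2 hu'
    refine (measurable_deriv u).aestronglyMeasurable.congr ?_
    filter_upwards [ae_restrict_mem measurableSet_Ioo] with t ht
    exact (hu t (Ioo_subset_Icc_self ht)).deriv
  have hFTC : u x = ∫ t in Ioo 0 x, u' t := by
    have hint : IntervalIntegrable u' volume 0 x :=
      (intervalIntegrable_iff_integrableOn_Ioo_of_le hx.1).2
        (IntegrableOn.mono_set (hL2.integrable one_le_two) (Ioo_subset_Ioo_right hx.2))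
    rw [← integral_Ioc_eq_integral_Ioo, ← intervalIntegral.integral_of_le hx.1,
      intervalIntegral.integral_eq_sub_of_hasDerivAt (f := u) (fun t ht => ?_) hint, hu0,
      sub_zero]
    rw [uIcc_of_le hx.1] at ht
    exact hu t ⟨ht.1, ht.2.trans hx.2⟩
  have hrestrict : ∫ t in Ioo 0 x, u' t = ∫ t in Ioo 0 1, (Iio x).indicator u' t := by
    rw [integral_indicator measurableSet_Iio, Measure.restrict_restrict measurableSet_Iio,
      inter_comm, Ioo_inter_Iio, min_eq_right hx.2]
  calc u x ^ 2 = (∫ t in Ioo 0 1, (Iio x).indicator u' t) ^ 2 := by rw [hFTC, hrestrict]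
    _ ≤ ∫ t in Ioo 0 1, (Iio x).indicator u' t ^ 2 :=
      sq_integral_le_integral_sq (hL2.indicator measurableSet_Iio)
    _ ≤ ∫ t in Ioo 0 1, u' t ^ 2 := by
      refine integral_mono (hL2.indicator measurableSet_Iio).integrable_sq hu' fun t => ?_
      by_cases ht : t ∈ Iio x <;> simp [ht, sq_nonneg]

theorem integral_sq_le_integral_sq_of_hasDerivAt {u u' : ℝ → ℝ}
    (hu : ∀ x ∈ Icc (0 : ℝ) 1, HasDerivAt u (u' x) x) (hu0 : u 0 = 0)
    (hu2 : IntegrableOn (fun x => u x ^ 2) (Ioo 0 1))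
    (hu' : IntegrableOn (fun x => u' x ^ 2) (Ioo 0 1)) :
    ∫ x in Ioo 0 1, u x ^ 2 ≤ ∫ x in Ioo 0 1, u' x ^ 2 := by
  calc ∫ x in Ioo 0 1, u x ^ 2 ≤ ∫ _ in Ioo (0 : ℝ) 1, ∫ t in Ioo 0 1, u' t ^ 2 :=
        setIntegral_mono_on hu2 (integrableOn_const measure_Ioo_lt_top.ne) measurableSet_Ioo
          fun x hx => sq_le_integral_sq_of_hasDerivAt hu hu0 hu' (Ioo_subset_Icc_self hx)
    _ = ∫ x in Ioo 0 1, u' x ^ 2 := by simp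

theorem integrable_div_and_integral_div_le {α : Type*} [MeasurableSpace α] {μ : Measure α}
    {g a : α → ℝ} {E : ℝ} (hg : AEStronglyMeasurable g μ)
    (hinv : Integrable (fun x => (a x)⁻¹) μ) (ha : 0 ≤ᵐ[μ] a) (hbound : ∀ᵐ x ∂μ, |g x| ≤ E) :
    Integrable (fun x => g x / a x) μ ∧ ∫ x, g x / a x ∂μ ≤ E * ∫ x, (a x)⁻¹ ∂μ := by
  have hint : Integrable (fun x => g x / a x) μ := by
    simpa only [div_eq_mul_inv] using hinv.bdd_mul hg hbound
  refine ⟨hint, ?_⟩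
  rw [← integral_const_mul]
  refine integral_mono_ae hint (hinv.const_mul E) ?_
  filter_upwards [ha, hbound] with x hx hgx
  rw [div_eq_mul_inv]
  exact mul_le_mul_of_nonneg_right ((le_abs_self _).trans hgx) (inv_nonneg.2 hx)

theorem stmt9_general (a : ℝ → ℝ) (x₀ K : ℝ)
    (hx₀ : x₀ ∈ Set.Ioo (0:ℝ) 1)
    (hcont : ContinuousOn a (Set.Icc 0 1))
    (hpos : ∀ x ∈ Set.Icc (0:ℝ) 1, x ≠ x₀ → 0 < a x)
    (hAC : MeasureTheory.IntegrableOn (deriv a) (Set.Icc 0 1) ∧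
      ∀ x ∈ Set.Icc (0:ℝ) 1, a x = a 0 + ∫ t in (0:ℝ)..x, deriv a t)
    (hK : K ∈ Set.Ioo (0:ℝ) 1)
    (hineq : ∀ᵐ x ∂(MeasureTheory.volume.restrict (Set.Icc (0:ℝ) 1)),
      (x - x₀) * deriv a x ≤ K * a x) :
    ∃ C ≥ (1:ℝ), ∀ (u u' : ℝ → ℝ),
      (∀ x ∈ Set.Icc (0:ℝ) 1, HasDerivAt u (u' x) x) →
      u 0 = 0 → u 1 = 0 →
      MeasureTheory.IntegrableOn (fun x => (u x) ^ 2) (Set.Ioo 0 1) →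
      MeasureTheory.IntegrableOn (fun x => (u' x) ^ 2) (Set.Ioo 0 1) →
      -- set coincidence: u ∈ H¹₀ implies u ∈ L²_{1/a}
      MeasureTheory.IntegrableOn (fun x => (u x) ^ 2 / a x) (Set.Ioo 0 1) ∧
      -- norm equivalence
      (1 / C) * ((∫ x in Set.Ioo (0:ℝ) 1, (u x) ^ 2) + ∫ x in Set.Ioo (0:ℝ) 1, (u' x) ^ 2) ≤
        (∫ x in Set.Ioo (0:ℝ) 1, (u x) ^ 2 / a x) + (∫ x in Set.Ioo (0:ℝ) 1, (u' x) ^ 2) ∧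
      (∫ x in Set.Ioo (0:ℝ) 1, (u x) ^ 2 / a x) + (∫ x in Set.Ioo (0:ℝ) 1, (u' x) ^ 2) ≤
        C * ((∫ x in Set.Ioo (0:ℝ) 1, (u x) ^ 2) + ∫ x in Set.Ioo (0:ℝ) 1, (u' x) ^ 2) := by
  have hac : AbsolutelyContinuousOnInterval a 0 1 :=
    absolutelyContinuousOnInterval_of_eq_add_integral
      ((intervalIntegrable_iff_integrableOn_Icc_of_le zero_le_one).2 hAC.1)
      (by simpa only [uIcc_of_le zero_le_one] using hAC.2)
  obtain ⟨m, hm, hle⟩ := hac.exists_pos_mul_abs_sub_rpow_le hx₀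
    (hpos 0 (left_mem_Icc.2 zero_le_one) hx₀.1.ne)
    (hpos 1 (right_mem_Icc.2 zero_le_one) hx₀.2.ne') hineq
  have hinv : IntegrableOn (fun x => (a x)⁻¹) (Ioo 0 1) :=
    integrableOn_inv_of_mul_abs_sub_rpow_le hK.2 hm
      ((hcont.mono Ioo_subset_Icc_self).aemeasurable measurableSet_Ioo)
      fun x hx => hle x (Ioo_subset_Icc_self hx)
  have ha : 0 ≤ᵐ[volume.restrict (Ioo 0 1)] a := by
    filter_upwards [ae_restrict_mem measurableSet_Ioo, Measure.ae_ne _ x₀] with x hx hne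
    exact (hpos x (Ioo_subset_Icc_self hx) hne).le
  have hM : 0 ≤ ∫ x in Ioo 0 1, (a x)⁻¹ :=
    integral_nonneg_of_ae (by filter_upwards [ha] with x hx using inv_nonneg.2 hx)
  refine ⟨(∫ x in Ioo 0 1, (a x)⁻¹) + 2, by linarith, fun u u' hu hu0 _ hu2 hu'2 => ?_⟩
  have hsup : ∀ᵐ x ∂volume.restrict (Ioo 0 1), |u x ^ 2| ≤ ∫ t in Ioo 0 1, u' t ^ 2 := by
    filter_upwards [ae_restrict_mem measurableSet_Ioo] with x hx
    rw [abs_of_nonneg (sq_nonneg _)]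
    exact sq_le_integral_sq_of_hasDerivAt hu hu0 hu'2 (Ioo_subset_Icc_self hx)
  obtain ⟨hint, hweighted⟩ := integrable_div_and_integral_div_le hu2.1 hinv ha hsup
  have hpoincare := integral_sq_le_integral_sq_of_hasDerivAt hu hu0 hu2 hu'2
  have hdiv0 : 0 ≤ ∫ x in Ioo 0 1, u x ^ 2 / a x :=
    integral_nonneg_of_ae (by filter_upwards [ha] with x hx using div_nonneg (sq_nonneg _) hx)
  have hderiv0 : 0 ≤ ∫ x in Ioo 0 1, u' x ^ 2 := integral_nonneg fun x => sq_nonneg _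
  have hsq0 : 0 ≤ ∫ x in Ioo 0 1, u x ^ 2 := integral_nonneg fun x => sq_nonneg _
  refine ⟨hint, ?_, by nlinarith [mul_nonneg hM hsq0]⟩
  rw [one_div, inv_mul_le_iff₀ (by linarith)]
  nlinarith [mul_nonneg hM hdiv0, mul_nonneg hM hderiv0]

/-- Proposition 2.5: in the weakly degenerate case, `H¹_{1/a}(0,1) = H¹₀(0,1)` as sets
(every `u ∈ H¹₀` has `∫ u²/a < ∞`) and the corresponding norms are equivalent. -/
theorem stmt9 (a : ℝ → ℝ) (x₀ K : ℝ)
    (hx₀ : x₀ ∈ Set.Ioo (0:ℝ) 1)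
    (hcont : ContinuousOn a (Set.Icc 0 1))
    (ha0 : a x₀ = 0)
    (hpos : ∀ x ∈ Set.Icc (0:ℝ) 1, x ≠ x₀ → 0 < a x)
    (hAC : MeasureTheory.IntegrableOn (deriv a) (Set.Icc 0 1) ∧
      ∀ x ∈ Set.Icc (0:ℝ) 1, a x = a 0 + ∫ t in (0:ℝ)..x, deriv a t)
    (hK : K ∈ Set.Ioo (0:ℝ) 1)
    (hineq : ∀ᵐ x ∂(MeasureTheory.volume.restrict (Set.Icc (0:ℝ) 1)),
      (x - x₀) * deriv a x ≤ K * a x) :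
    ∃ C ≥ (1:ℝ), ∀ (u u' : ℝ → ℝ),
      (∀ x ∈ Set.Icc (0:ℝ) 1, HasDerivAt u (u' x) x) →
      u 0 = 0 → u 1 = 0 →
      MeasureTheory.IntegrableOn (fun x => (u x) ^ 2) (Set.Ioo 0 1) →
      MeasureTheory.IntegrableOn (fun x => (u' x) ^ 2) (Set.Ioo 0 1) →
      -- set coincidence: u ∈ H¹₀ implies u ∈ L²_{1/a}
      MeasureTheory.IntegrableOn (fun x => (u x) ^ 2 / a x) (Set.Ioo 0 1) ∧
      -- norm equivalence
      (1 / C) * ((∫ x in Set.Ioo (0:ℝ) 1, (u x) ^ 2) + ∫ x in Set.Ioo (0:ℝ) 1, (u' x) ^ 2) ≤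
        (∫ x in Set.Ioo (0:ℝ) 1, (u x) ^ 2 / a x) + (∫ x in Set.Ioo (0:ℝ) 1, (u' x) ^ 2) ∧
      (∫ x in Set.Ioo (0:ℝ) 1, (u x) ^ 2 / a x) + (∫ x in Set.Ioo (0:ℝ) 1, (u' x) ^ 2) ≤
        C * ((∫ x in Set.Ioo (0:ℝ) 1, (u x) ^ 2) + ∫ x in Set.Ioo (0:ℝ) 1, (u' x) ^ 2) :=
  stmt9_general a x₀ K hx₀ hcont hpos hAC hK hineq
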